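/- arXiv:1809.09819 — 2 statements merged into one kernel-verified Lean document; each statement's English description precedes it below -/
import Mathlib

section
/- Let f : {-1,1}^n → {-1,1} and let μ be a finitely supported probability distribution over functions T : {-1,1}^n → {-1,1} such that every T in the support of μ has Fourier spectral norm Σ_S |T̂(S)| ≤ 2^r, and such that E_x E_{T∼μ}[f(x)·T(x)] ≥ 1/3. Then max_{S ⊆ [n]} |f̂(S)| ≥ 2^{−r}/3, and consequently the Fourier min-entropy satisfies H_∞(f̂²) ≤ 2(r + log₂ 3). -/
open Finset

/-- The real value (`1` or `-1`) encoded by a Boolean. -/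
noncomputable def bsgn (b : Bool) : ℝ := if b then 1 else -1

/-- The character `χ_S(x) = ∏_{i ∈ S} x_i` on the hypercube `{-1,1}^n`. -/
noncomputable def chi {n : ℕ} (S : Finset (Fin n)) (x : Fin n → Bool) : ℝ :=
  ∏ i ∈ S, bsgn (x i)

/-- The Fourier coefficient `f̂(S) = E_x [f(x)·χ_S(x)]`. -/
noncomputable def fCoeff {n : ℕ} (f : (Fin n → Bool) → ℝ) (S : Finset (Fin n)) : ℝ :=
  (∑ x : Fin n → Bool, f x * chi S x) / 2 ^ n

/-- The Fourier (Shannon) entropy `H(f̂²) = Σ_S f̂(S)² log₂(1/f̂(S)²)`. -/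
noncomputable def fEntropy {n : ℕ} (f : (Fin n → Bool) → ℝ) : ℝ :=
  ∑ S : Finset (Fin n), (fCoeff f S) ^ 2 * Real.logb 2 (1 / (fCoeff f S) ^ 2)

/-- The Fourier min-entropy `H_∞(f̂²) = min_{S : f̂(S) ≠ 0} log₂(1/f̂(S)²)`. -/
noncomputable def fMinEntropy {n : ℕ} (f : (Fin n → Bool) → ℝ) : ℝ :=
  sInf {y : ℝ | ∃ S : Finset (Fin n),
    fCoeff f S ≠ 0 ∧ y = Real.logb 2 (1 / (fCoeff f S) ^ 2)}

/-- The total influence `Inf(f) = Σ_S |S|·f̂(S)²`. -/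
noncomputable def totalInf {n : ℕ} (f : (Fin n → Bool) → ℝ) : ℝ :=
  ∑ S : Finset (Fin n), (S.card : ℝ) * (fCoeff f S) ^ 2

/-- `f` is a Boolean (`±1`-valued) function. -/
def IsBooleanFunc {n : ℕ} (f : (Fin n → Bool) → ℝ) : Prop := ∀ x, f x = 1 ∨ f x = -1

/-! By Plancherel, `E_x[f(x)T(x)] = Σ_S f̂(S) T̂(S) ≤ (max_S |f̂(S)|) · Σ_S |T̂(S)|`, so averaging over
`T ∼ μ` gives `1/3 ≤ 2^r · max_S |f̂(S)|`. A coefficient of absolute value at least `2^{-r}/3` is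
in particular nonzero, hence bounds the min-entropy by `log₂(9 · 4^r)`. -/

lemma bsgn_mul_bsgn_add_one (a b : Bool) :
    bsgn a * bsgn b + 1 = if a = b then 2 else 0 := by
  cases a <;> cases b <;> norm_num [bsgn]

lemma sum_chi_mul_chi {n : ℕ} (x y : Fin n → Bool) :
    ∑ S : Finset (Fin n), chi S x * chi S y = if x = y then (2 : ℝ) ^ n else 0 := by
  calc ∑ S : Finset (Fin n), chi S x * chi S y
      = ∏ i, (bsgn (x i) * bsgn (y i) + 1) := by
        simp only [chi, ← Finset.prod_mul_distrib, Finset.prod_add_one, Finset.powerset_univ]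
    _ = if x = y then (2 : ℝ) ^ n else 0 := by
        simp only [bsgn_mul_bsgn_add_one, Fintype.prod_ite_zero, funext_iff]
        simp

lemma sum_fCoeff_mul_chi {n : ℕ} (g : (Fin n → Bool) → ℝ) (x : Fin n → Bool) :
    ∑ S : Finset (Fin n), fCoeff g S * chi S x = g x := by
  simp only [fCoeff, div_mul_eq_mul_div, ← Finset.sum_div, Finset.sum_mul]
  rw [Finset.sum_comm]
  simp only [mul_assoc, ← Finset.mul_sum, sum_chi_mul_chi, mul_ite, mul_zero,
    Finset.sum_ite_eq', Finset.mem_univ, if_true]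
  field_simp

theorem sum_mul_div_eq_sum_fCoeff_mul_fCoeff {n : ℕ} (f g : (Fin n → Bool) → ℝ) :
    (∑ x, f x * g x) / 2 ^ n = ∑ S : Finset (Fin n), fCoeff f S * fCoeff g S := by
  conv_lhs => enter [1, 2, x]; rw [← sum_fCoeff_mul_chi g x, Finset.mul_sum]
  rw [Finset.sum_comm, Finset.sum_div]
  refine Finset.sum_congr rfl fun S _ => ?_
  simp only [mul_left_comm (f _) (fCoeff g S), ← Finset.mul_sum]
  rw [mul_div_assoc, mul_comm]
  rfl

theorem sum_mul_div_le_sup_abs_fCoeff_mul {n : ℕ} (f g : (Fin n → Bool) → ℝ) :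
    (∑ x, f x * g x) / 2 ^ n ≤
      Finset.univ.sup' Finset.univ_nonempty (fun S : Finset (Fin n) => |fCoeff f S|) *
        ∑ S : Finset (Fin n), |fCoeff g S| := by
  rw [sum_mul_div_eq_sum_fCoeff_mul_fCoeff, Finset.mul_sum]
  refine Finset.sum_le_sum fun S hS => ?_
  calc fCoeff f S * fCoeff g S ≤ |fCoeff f S| * |fCoeff g S| := by
        rw [← abs_mul]; exact le_abs_self _
    _ ≤ _ := by gcongr; exact Finset.le_sup' (fun S => |fCoeff f S|) hS

theorem fMinEntropy_le_logb_one_div_sq {n : ℕ} (f : (Fin n → Bool) → ℝ) {S : Finset (Fin n)}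
    {ε : ℝ} (hε : 0 < ε) (hS : ε ≤ |fCoeff f S|) :
    fMinEntropy f ≤ Real.logb 2 (1 / ε ^ 2) := by
  have hfS : fCoeff f S ≠ 0 := abs_pos.mp (hε.trans_le hS)
  have hbdd : BddBelow {y : ℝ | ∃ S : Finset (Fin n),
      fCoeff f S ≠ 0 ∧ y = Real.logb 2 (1 / (fCoeff f S) ^ 2)} :=
    ((Set.finite_range fun S => Real.logb 2 (1 / (fCoeff f S) ^ 2)).subset
      (by rintro _ ⟨S, -, rfl⟩; exact ⟨S, rfl⟩)).bddBelow
  calc fMinEntropy f ≤ Real.logb 2 (1 / (fCoeff f S) ^ 2) := csInf_le hbdd ⟨S, hfS, rfl⟩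
    _ ≤ Real.logb 2 (1 / ε ^ 2) := by
        have hsq : ε ^ 2 ≤ fCoeff f S ^ 2 := by
          simpa only [sq_abs] using pow_le_pow_left₀ hε.le hS 2
        exact Real.logb_le_logb_of_le one_lt_two (by positivity)
          (one_div_le_one_div_of_le (by positivity) hsq)

theorem stmt2_general {n m : ℕ} (f : (Fin n → Bool) → ℝ)
    (r : ℝ) (w : Fin m → ℝ) (T : Fin m → ((Fin n → Bool) → ℝ))
    (hw0 : ∀ j, 0 ≤ w j) (hw1 : ∑ j, w j = 1)
    (hTnorm : ∀ j, ∑ S : Finset (Fin n), |fCoeff (T j) S| ≤ (2 : ℝ) ^ r)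
    (hcorr : (1 : ℝ) / 3 ≤ ∑ j, w j * ((∑ x : Fin n → Bool, f x * T j x) / 2 ^ n)) :
    (2 : ℝ) ^ (-r) / 3 ≤
      Finset.univ.sup' Finset.univ_nonempty (fun S : Finset (Fin n) => |fCoeff f S|) ∧
    fMinEntropy f ≤ 2 * (r + Real.logb 2 3) := by
  set M := Finset.univ.sup' Finset.univ_nonempty (fun S : Finset (Fin n) => |fCoeff f S|)
  have hM : 0 ≤ M :=
    (abs_nonneg _).trans (Finset.le_sup' (fun S => |fCoeff f S|) (Finset.mem_univ ∅))
  have h2r : (0 : ℝ) < 2 ^ r := by positivity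
  have hcorr_le : (1 : ℝ) / 3 ≤ M * 2 ^ r :=
    calc (1 : ℝ) / 3 ≤ ∑ j, w j * (M * 2 ^ r) := hcorr.trans <|
          Finset.sum_le_sum fun j _ => mul_le_mul_of_nonneg_left
            ((sum_mul_div_le_sup_abs_fCoeff_mul f (T j)).trans
              (mul_le_mul_of_nonneg_left (hTnorm j) hM)) (hw0 j)
      _ = M * 2 ^ r := by rw [← Finset.sum_mul, hw1, one_mul]
  have hmax : (2 : ℝ) ^ (-r) / 3 ≤ M := by
    rw [Real.rpow_neg zero_le_two, div_le_iff₀ three_pos, inv_le_iff_one_le_mul₀' h2r]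
    linarith
  refine ⟨hmax, ?_⟩
  obtain ⟨S₀, -, hS₀⟩ := Finset.exists_mem_eq_sup' Finset.univ_nonempty
    (fun S : Finset (Fin n) => |fCoeff f S|)
  calc fMinEntropy f ≤ Real.logb 2 (1 / ((2 : ℝ) ^ (-r) / 3) ^ 2) :=
        fMinEntropy_le_logb_one_div_sq f (by positivity) (hmax.trans hS₀.le)
    _ = 2 * (r + Real.logb 2 3) := by
        rw [one_div, ← inv_pow, inv_div, Real.logb_pow,
          Real.logb_div three_ne_zero (by positivity), Real.logb_rpow two_pos (by norm_num)]
        push_cast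
        ring

/-- If `μ` is a finitely supported probability distribution (here: weights
`w j` on functions `T j`, `j` ranging over a finite index set) over `±1`-valued functions,
each of Fourier spectral norm at most `2^r`, and `E_x E_{T∼μ}[f(x)·T(x)] ≥ 1/3`, then
`max_S |f̂(S)| ≥ 2^{-r}/3`, and consequently `H_∞(f̂²) ≤ 2(r + log₂ 3)`. -/
theorem stmt2 {n m : ℕ} (f : (Fin n → Bool) → ℝ) (hf : IsBooleanFunc f)
    (r : ℝ) (w : Fin m → ℝ) (T : Fin m → ((Fin n → Bool) → ℝ))
    (hw0 : ∀ j, 0 ≤ w j) (hw1 : ∑ j, w j = 1)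
    (hTbool : ∀ j, IsBooleanFunc (T j))
    (hTnorm : ∀ j, ∑ S : Finset (Fin n), |fCoeff (T j) S| ≤ (2 : ℝ) ^ r)
    (hcorr : (1 : ℝ) / 3 ≤ ∑ j, w j * ((∑ x : Fin n → Bool, f x * T j x) / 2 ^ n)) :
    (2 : ℝ) ^ (-r) / 3 ≤
      Finset.univ.sup' Finset.univ_nonempty (fun S : Finset (Fin n) => |fCoeff f S|) ∧
    fMinEntropy f ≤ 2 * (r + Real.logb 2 3) :=
  stmt2_general f r w T hw0 hw1 hTnorm hcorr
end

section
/- Let f : {-1,1}^n → {-1,1} be a Boolean function and δ > 0. Suppose there is an 𝔽₂-affine subspace H ⊆ {-1,1}^n of co-dimension k (given by k linearly independent parity constraints ∏_{i ∈ supp(v_j)} x_i = b_j, j = 1,…,k) on which f is constant. Then the Rényi Fourier entropy of order 1+δ satisfies H_{1+δ}(f̂²) ≤ 2·(1 + 1/δ)·k. -/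
/-!
If `f ≡ c` on the affine subspace `H = {x | χ_{v_j}(x) = b_j ∀ j}`, expand the weight
`∏_j (1 + b_j χ_{v_j}) = 2^k · 1_H` into the `2^k` characters `± χ_{Σ_{j ∈ T} v_j}`.
Linear independence makes these characters nontrivial for `T ≠ ∅`, so the weight has mean `1`
(in particular `H ≠ ∅`), and averaging `f` against it gives `c = Σ_T ± f̂(S_T)`.
As `|c| = 1`, some `|f̂(S)| ≥ 2^{-k}`, and a single coefficient of that size already forces
`H_α(f̂²) ≤ (α / (α - 1)) · 2k` for every `α > 1`.
-/

open Finset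

/-- The Rényi Fourier entropy of order `α`:
`H_α(f̂²) = (1/(1-α)) · log₂ ( Σ_S |f̂(S)|^{2α} )`. -/
noncomputable def renyiEntropy {n : ℕ} (f : (Fin n → Bool) → ℝ) (α : ℝ) : ℝ :=
  (1 / (1 - α)) * Real.logb 2 (∑ S : Finset (Fin n), |fCoeff f S| ^ (2 * α))

lemma bsgn_sq (b : Bool) : bsgn b ^ 2 = 1 := by cases b <;> simp [bsgn]

lemma abs_bsgn (b : Bool) : |bsgn b| = 1 := by cases b <;> simp [bsgn]

lemma pow_mod_two_of_sq_eq_one {M : Type*} [Monoid M] {t : M} (ht : t ^ 2 = 1) (m : ℕ) :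
    t ^ (m % 2) = t ^ m := by
  conv_rhs => rw [← Nat.mod_add_div m 2, pow_add, pow_mul, ht, one_pow, mul_one]

lemma ZMod.eq_zero_or_eq_one_of_two (a : ZMod 2) : a = 0 ∨ a = 1 := by
  decide +revert

lemma eq_of_sq_eq_one_of_one_add_mul_ne_zero {R : Type*} [CommRing R] [NoZeroDivisors R]
    {s c : R} (hs : s ^ 2 = 1) (hc : c ^ 2 = 1) (h : 1 + s * c ≠ 0) : c = s := by
  have : (c - s) * (c + s) = 0 := by linear_combination hc - hs
  rcases mul_eq_zero.1 this with h' | h'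
  · exact sub_eq_zero.1 h'
  · exact absurd (by linear_combination s * h' - hs) h

lemma LinearIndependent.sum_ne_zero {ι R M : Type*} [Ring R] [Nontrivial R] [AddCommGroup M]
    [Module R M] {v : ι → M} (hv : LinearIndependent R v) {T : Finset ι} (hT : T.Nonempty) :
    ∑ j ∈ T, v j ≠ 0 := by
  intro h
  obtain ⟨j, hj⟩ := hT
  exact one_ne_zero (linearIndependent_iff'.1 hv T (fun _ => 1) (by simpa using h) j hj)

section Characters

variable {n : ℕ}

/-- `χ_S` indexed by the indicator vector of `S` in `𝔽₂ⁿ`, where it becomes multiplicative. -/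
noncomputable def chiVec (v : Fin n → ZMod 2) (x : Fin n → Bool) : ℝ :=
  ∏ i, bsgn (x i) ^ (v i).val

lemma chiVec_eq_chi (v : Fin n → ZMod 2) (x : Fin n → Bool) :
    chiVec v x = chi (univ.filter fun i => v i = 1) x := by
  rw [chiVec, chi, prod_filter]
  refine prod_congr rfl fun i _ => ?_
  rcases (v i).eq_zero_or_eq_one_of_two with h | h <;> simp [h, ZMod.val_one]

lemma chiVec_zero (x : Fin n → Bool) : chiVec 0 x = 1 := by
  simp [chiVec]

lemma chiVec_add (u w : Fin n → ZMod 2) (x : Fin n → Bool) :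
    chiVec (u + w) x = chiVec u x * chiVec w x := by
  simp only [chiVec, ← prod_mul_distrib, Pi.add_apply, ZMod.val_add,
    pow_mod_two_of_sq_eq_one (bsgn_sq _), pow_add]

lemma chiVec_sum {k : ℕ} (v : Fin k → Fin n → ZMod 2) (T : Finset (Fin k))
    (x : Fin n → Bool) : chiVec (∑ j ∈ T, v j) x = ∏ j ∈ T, chiVec (v j) x := by
  classical
  induction T using Finset.induction_on with
  | empty => simp [chiVec_zero]
  | insert a s h ih => rw [sum_insert h, prod_insert h, chiVec_add, ih]

lemma chiVec_sq (v : Fin n → ZMod 2) (x : Fin n → Bool) : chiVec v x ^ 2 = 1 := by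
  rw [chiVec, ← prod_pow]
  exact prod_eq_one fun i _ => by rw [← pow_mul, mul_comm, pow_mul, bsgn_sq, one_pow]

lemma sum_chiVec (v : Fin n → ZMod 2) :
    ∑ x, chiVec v x = if v = 0 then 2 ^ n else 0 := by
  simp only [chiVec]
  rw [← Fintype.prod_sum fun i b => bsgn b ^ (v i).val]
  split_ifs with hv
  · simp [hv]
  · obtain ⟨i, hi⟩ := Function.ne_iff.1 hv
    refine prod_eq_zero (mem_univ i) ?_
    rcases (v i).eq_zero_or_eq_one_of_two with h | h
    · exact absurd h hi
    · simp [h, ZMod.val_one, bsgn]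

end Characters

section AffineSubspace

variable {n k : ℕ} (v : Fin k → Fin n → ZMod 2) (b : Fin k → Bool)

/-- `2 ^ k` times the indicator of the affine subspace `{x | ∀ j, χ_{v j}(x) = bsgn (b j)}`. -/
noncomputable def affineWeight (x : Fin n → Bool) : ℝ :=
  ∏ j, (1 + bsgn (b j) * chiVec (v j) x)

lemma affineWeight_eq_sum (x : Fin n → Bool) :
    affineWeight v b x =
      ∑ T : Finset (Fin k), (∏ j ∈ T, bsgn (b j)) * chiVec (∑ j ∈ T, v j) x := by
  simp only [affineWeight, prod_one_add, powerset_univ, prod_mul_distrib, chiVec_sum]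

lemma chiVec_eq_bsgn_of_affineWeight_ne_zero {x : Fin n → Bool} (hx : affineWeight v b x ≠ 0)
    (j : Fin k) : chiVec (v j) x = bsgn (b j) :=
  eq_of_sq_eq_one_of_one_add_mul_ne_zero (bsgn_sq _) (chiVec_sq _ _)
    fun h => hx (prod_eq_zero (mem_univ j) h)

lemma sum_mul_affineWeight (g : (Fin n → Bool) → ℝ) :
    ∑ x, g x * affineWeight v b x = 2 ^ n *
      ∑ T : Finset (Fin k), (∏ j ∈ T, bsgn (b j)) *
        fCoeff g (univ.filter fun i => (∑ j ∈ T, v j) i = 1) := by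
  simp only [affineWeight_eq_sum, mul_sum, fCoeff]
  rw [sum_comm]
  refine sum_congr rfl fun T _ => ?_
  rw [mul_left_comm, mul_div_cancel₀ _ (pow_ne_zero n two_ne_zero), mul_sum]
  exact sum_congr rfl fun x _ => by rw [chiVec_eq_chi]; ring

lemma sum_affineWeight (hv : LinearIndependent (ZMod 2) v) :
    ∑ x, affineWeight v b x = 2 ^ n := by
  simp only [affineWeight_eq_sum, sum_comm (γ := Fin n → Bool), ← mul_sum, sum_chiVec]
  rw [sum_eq_single ∅ ?_ (by simp)]
  · simp
  · intro T _ hT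
    rw [if_neg (hv.sum_ne_zero (nonempty_iff_ne_empty.2 hT)), mul_zero]

end AffineSubspace

section ConstantOnAffineSubspace

variable {n k : ℕ} {f : (Fin n → Bool) → ℝ} {v : Fin k → Fin n → ZMod 2} {b : Fin k → Bool}

lemma exists_sum_sign_mul_fCoeff_eq (hv : LinearIndependent (ZMod 2) v)
    (hconst : ∀ x y, (∀ j, chiVec (v j) x = bsgn (b j)) → (∀ j, chiVec (v j) y = bsgn (b j)) →
      f x = f y) :
    ∃ x₀, ∑ T : Finset (Fin k), (∏ j ∈ T, bsgn (b j)) *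
      fCoeff f (univ.filter fun i => (∑ j ∈ T, v j) i = 1) = f x₀ := by
  have hmass := sum_affineWeight v b hv
  obtain ⟨x₀, -, hx₀⟩ := exists_ne_zero_of_sum_ne_zero (hmass ▸ pow_ne_zero n two_ne_zero)
  refine ⟨x₀, mul_left_cancel₀ (pow_ne_zero n two_ne_zero) ?_⟩
  calc _ = ∑ x, f x * affineWeight v b x := (sum_mul_affineWeight v b f).symm
    _ = ∑ x, f x₀ * affineWeight v b x := sum_congr rfl fun x _ => by
      by_cases hx : affineWeight v b x = 0
      · simp [hx]
      · rw [hconst x x₀ (chiVec_eq_bsgn_of_affineWeight_ne_zero v b hx)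
          (chiVec_eq_bsgn_of_affineWeight_ne_zero v b hx₀)]
    _ = 2 ^ n * f x₀ := by rw [← mul_sum, hmass, mul_comm]

lemma exists_inv_two_pow_le_abs_fCoeff (hf : IsBooleanFunc f) (hv : LinearIndependent (ZMod 2) v)
    (hconst : ∀ x y, (∀ j, chiVec (v j) x = bsgn (b j)) → (∀ j, chiVec (v j) y = bsgn (b j)) →
      f x = f y) :
    ∃ S, ((2 : ℝ) ^ k)⁻¹ ≤ |fCoeff f S| := by
  obtain ⟨x₀, hx₀⟩ := exists_sum_sign_mul_fCoeff_eq hv hconst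
  have hsum : ∑ _T : Finset (Fin k), ((2 : ℝ) ^ k)⁻¹ ≤
      ∑ T : Finset (Fin k), |fCoeff f (univ.filter fun i => (∑ j ∈ T, v j) i = 1)| :=
    calc _ = |f x₀| := by
          rcases hf x₀ with h | h <;> simp [h, card_univ]
      _ ≤ _ := hx₀ ▸ abs_sum_le_sum_abs _ _
      _ = _ := by simp only [abs_mul, abs_prod, abs_bsgn, prod_const_one, one_mul]
  obtain ⟨T, -, hT⟩ := exists_le_of_sum_le univ_nonempty hsum
  exact ⟨_, hT⟩

end ConstantOnAffineSubspace

lemma renyiEntropy_le_of_le_abs_fCoeff {n : ℕ} {f : (Fin n → Bool) → ℝ} {α a : ℝ}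
    {S : Finset (Fin n)} (hα : 1 < α) (ha : 0 < a) (hS : a ≤ |fCoeff f S|) :
    renyiEntropy f α ≤ 2 * α / (α - 1) * Real.logb 2 a⁻¹ := by
  set L := Real.logb 2 (∑ S, |fCoeff f S| ^ (2 * α))
  have hpow : a ^ (2 * α) ≤ ∑ S, |fCoeff f S| ^ (2 * α) :=
    (Real.rpow_le_rpow ha.le hS (by linarith)).trans
      (single_le_sum (f := fun S => |fCoeff f S| ^ (2 * α)) (fun S _ => by positivity)
        (mem_univ S))
  have hlog : 2 * α * Real.logb 2 a ≤ L := by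
    rw [← Real.logb_rpow_eq_mul_logb_of_pos ha]
    exact Real.logb_le_logb_of_le one_lt_two (by positivity) hpow
  have hα' : 0 < α - 1 := sub_pos.2 hα
  calc renyiEntropy f α = -L / (α - 1) := by
        rw [renyiEntropy, ← neg_sub, div_neg, neg_mul, neg_div, one_div_mul_eq_div]
    _ ≤ -(2 * α * Real.logb 2 a) / (α - 1) := by gcongr
    _ = _ := by rw [Real.logb_inv]; ring

/-- If `f` is constant on an 𝔽₂-affine subspace of co-dimension `k`
(given by `k` linearly independent parity constraints), then for every `δ > 0` the
Rényi Fourier entropy of order `1+δ` satisfies `H_{1+δ}(f̂²) ≤ 2(1 + 1/δ)·k`. -/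
theorem stmt3 {n k : ℕ} (f : (Fin n → Bool) → ℝ) (hf : IsBooleanFunc f)
    (δ : ℝ) (hδ : 0 < δ)
    (v : Fin k → (Fin n → ZMod 2)) (hv : LinearIndependent (ZMod 2) v)
    (b : Fin k → Bool)
    (hconst : ∀ x y : Fin n → Bool,
      (∀ j, ∏ i ∈ Finset.univ.filter (fun i => v j i = 1), bsgn (x i) = bsgn (b j)) →
      (∀ j, ∏ i ∈ Finset.univ.filter (fun i => v j i = 1), bsgn (y i) = bsgn (b j)) →
      f x = f y) :
    renyiEntropy f (1 + δ) ≤ 2 * (1 + 1 / δ) * k := by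
  obtain ⟨S, hS⟩ := exists_inv_two_pow_le_abs_fCoeff hf hv (by simpa only [chiVec_eq_chi, chi])
  calc renyiEntropy f (1 + δ) ≤ 2 * (1 + δ) / (1 + δ - 1) * Real.logb 2 ((2 ^ k)⁻¹)⁻¹ :=
        renyiEntropy_le_of_le_abs_fCoeff (by linarith) (by positivity) hS
    _ = 2 * (1 + 1 / δ) * k := by
        rw [inv_inv, Real.logb_pow, Real.logb_self_eq_one one_lt_two]
        field_simp [hδ.ne']
        ring
end
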